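/- A function p : {0,1}³ → ℝ is a 3-dimensional binary probability table with uniform margins satisfying p₀₁₁ = p₁₀₁ = p₁₁₀ = 0 if and only if there exists λ ∈ [0,1] such that p = λ r₁ + (1 − λ) r₆, where r₁ = (1/2)(δ₀₀₀ + δ₁₁₁) and r₆ = (1/4)(δ₁₀₀ + δ₀₁₀ + δ₀₀₁ + δ₁₁₁). -/
import Mathlib

/-- Indicator function of the cell `c`. -/
def δ (c : Fin 3 → Fin 2) : (Fin 3 → Fin 2) → ℝ :=
  fun α => if α = c then 1 else 0

lemma univ_eq : (Finset.univ : Finset (Fin 3 → Fin 2)) =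
    {![0,0,0], ![0,0,1], ![0,1,0], ![0,1,1], ![1,0,0], ![1,0,1], ![1,1,0], ![1,1,1]} := by
  decide

lemma sum_pi (f : (Fin 3 → Fin 2) → ℝ) :
    ∑ α, f α = f ![0,0,0] + f ![0,0,1] + f ![0,1,0] + f ![0,1,1]
      + f ![1,0,0] + f ![1,0,1] + f ![1,1,0] + f ![1,1,1] := by
  rw [univ_eq]
  repeat rw [Finset.sum_insert (by decide)]
  rw [Finset.sum_singleton]; ring

theorem stmt_14 (p : (Fin 3 → Fin 2) → ℝ) :
    ((∀ α, 0 ≤ p α) ∧ (∑ α, p α = 1) ∧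
      (∀ i : Fin 3,
        ∑ α ∈ Finset.univ.filter (fun α : Fin 3 → Fin 2 => α i = 0), p α = 1 / 2) ∧
      p ![0, 1, 1] = 0 ∧ p ![1, 0, 1] = 0 ∧ p ![1, 1, 0] = 0) ↔
    ∃ lam : ℝ, lam ∈ Set.Icc (0 : ℝ) 1 ∧
      p = lam • ((1 / 2 : ℝ) • (δ ![0, 0, 0] + δ ![1, 1, 1])) +
          (1 - lam) • ((1 / 4 : ℝ) •
            (δ ![1, 0, 0] + δ ![0, 1, 0] + δ ![0, 0, 1] + δ ![1, 1, 1])) := by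
  constructor
  · rintro ⟨hpos, hsum, hmarg, h011, h101, h110⟩
    rw [sum_pi] at hsum
    have h0 := hmarg 0
    have h1 := hmarg 1
    have h2 := hmarg 2
    rw [Finset.sum_filter, sum_pi] at h0 h1 h2
    simp only [Matrix.cons_val_zero, Matrix.cons_val_one, Matrix.head_cons,
      Matrix.cons_val_two, Matrix.tail_cons, Fin.isValue,
      if_true, if_false, show (0:Fin 2) = 0 ↔ True by simp,
      show (1:Fin 2) = 0 ↔ False by simp, ite_true, ite_false] at h0 h1 h2
    refine ⟨2 * p ![0,0,0], ⟨by have := hpos ![0,0,0]; linarith, ?_⟩, ?_⟩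
    · have := hpos ![0,0,1]
      have := hpos ![0,1,0]
      linarith
    · funext α
      have hα : α = ![0,0,0] ∨ α = ![0,0,1] ∨ α = ![0,1,0] ∨ α = ![0,1,1]
          ∨ α = ![1,0,0] ∨ α = ![1,0,1] ∨ α = ![1,1,0] ∨ α = ![1,1,1] := by
        revert α; decide
      rcases hα with h|h|h|h|h|h|h|h <;> subst h <;>
        simp only [δ, Pi.add_apply, Pi.smul_apply, smul_eq_mul] <;>
        simp (config := { decide := true }) only [δ] <;> norm_num <;>
        linarith
  · rintro ⟨l, ⟨hl0, hl1⟩, rfl⟩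
    refine ⟨?_, ?_, ?_, ?_, ?_, ?_⟩
    · intro α
      have hα : α = ![0,0,0] ∨ α = ![0,0,1] ∨ α = ![0,1,0] ∨ α = ![0,1,1]
          ∨ α = ![1,0,0] ∨ α = ![1,0,1] ∨ α = ![1,1,0] ∨ α = ![1,1,1] := by
        revert α; decide
      rcases hα with h|h|h|h|h|h|h|h <;> subst h <;>
        simp only [δ, Pi.add_apply, Pi.smul_apply, smul_eq_mul] <;>
        simp (config := { decide := true }) only [δ] <;> norm_num <;>
        linarith
    · rw [sum_pi]
      simp only [δ, Pi.add_apply, Pi.smul_apply, smul_eq_mul]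
      simp (config := { decide := true }) only [δ]
      norm_num
      ring
    · intro i
      rw [Finset.sum_filter, sum_pi]
      fin_cases i <;>
        simp only [δ, Pi.add_apply, Pi.smul_apply, smul_eq_mul, Matrix.cons_val_zero,
          Matrix.cons_val_one, Matrix.head_cons, Matrix.cons_val_two, Matrix.tail_cons] <;>
        simp (config := { decide := true }) only [δ] <;> norm_num <;>
        ring
    all_goals
      simp only [δ, Pi.add_apply, Pi.smul_apply, smul_eq_mul] <;>
      simp (config := { decide := true }) only [δ] <;> norm_num <;> ring
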